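/- Let 𝒜 be an abelian category and T₁, T₂ objects of 𝒜, and let m, n ≥ 1. Then [T₁]_m • [T₂]_n ⊆ [T₁ ⊕ T₂]_{m+n}. -/

import Mathlib

/-!
The key step is the associativity-type inclusion `(𝒰₁ • 𝒰₂) • 𝒰₃ ⊆ 𝒰₁ • (𝒰₂ • 𝒰₃)` for
add-closed `𝒰₁, 𝒰₂`. Take `0 → B → E → W → 0` with `W ∈ 𝒰₃` and `B` a summand of some
`B'` with `0 → S' → B' → T' → 0`, `S' ∈ 𝒰₁`, `T' ∈ 𝒰₂` (finite sums of such sequences are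
again such sequences). Pushing out along the split mono `B → B'` makes `E` a summand of an
extension `0 → B' → P → W → 0`; pushing that out along `B' → T'` gives `0 → T' → Q → W → 0`
and `0 → S' → P → Q → 0`, so `P ∈ 𝒰₁ • (𝒰₂ • 𝒰₃)`. Induction on `m` then gives
`[T]_m • [T]_n ⊆ [T]_{m+n}`, and `[Tᵢ]_k ⊆ [T₁ ⊕ T₂]_k` since `Tᵢ ∈ add(T₁ ⊕ T₂)`.
-/

open CategoryTheory Limits

attribute [local instance] CategoryTheory.Limits.HasFiniteBiproducts.of_hasFiniteProducts

noncomputable section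

universe v u

variable {C : Type u} [Category.{v} C] [Abelian C]

/-- `add 𝒰`: the class of direct summands of finite direct sums of objects of `𝒰`. -/
def addClosure (S : Set C) : Set C :=
  {X | ∃ (n : ℕ) (g : Fin n → C), (∀ k, g k ∈ S) ∧
    ∃ (s : X ⟶ ⨁ g) (p : (⨁ g) ⟶ X), s ≫ p = 𝟙 X}

/-- The operation `𝒰₁ • 𝒰₂`:  `add` of the class of objects `A` admitting a short exact
sequence `0 → U₁ → A → U₂ → 0` with `U₁ ∈ 𝒰₁` and `U₂ ∈ 𝒰₂`. -/
def bulletOp (S T : Set C) : Set C :=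
  addClosure {X | ∃ (U V : C) (_ : U ∈ S) (_ : V ∈ T) (f : U ⟶ X) (g : X ⟶ V)
    (w : f ≫ g = 0), (ShortComplex.mk f g w).ShortExact}

/-- `[T]_n`:  `[T]₀` is the class of zero objects, `[T]₁ = add T` and
`[T]_{n+1} = [T]₁ • [T]_n`. -/
def bracket (T : C) : ℕ → Set C
  | 0 => {X | IsZero X}
  | n + 1 => bulletOp (addClosure {T}) (bracket T n)

section addClosure

variable {S T : Set C}

lemma mem_addClosure_of_retract {X Y : C} (r : Retract X Y) (hY : Y ∈ addClosure S) :
    X ∈ addClosure S := by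
  obtain ⟨n, g, hg, s, p, hsp⟩ := hY
  exact ⟨n, g, hg, r.i ≫ s, p ≫ r.r, by simp [reassoc_of% hsp]⟩

lemma biproduct_mem_addClosure {ι : Type} [Finite ι] {g : ι → C} (hg : ∀ i, g i ∈ S) :
    (⨁ g) ∈ addClosure S :=
  let e := biproduct.whiskerEquiv (g := g ∘ (Finite.equivFin ι).symm) (Finite.equivFin ι)
    fun i => eqToIso (by simp)
  ⟨_, _, fun _ => hg _, e.hom, e.inv, e.hom_inv_id⟩

lemma subset_addClosure : S ⊆ addClosure S := fun X hX =>
  mem_addClosure_of_retract ⟨biproduct.ι (fun _ : Unit => X) (), biproduct.π _ (), by simp⟩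
    (biproduct_mem_addClosure fun _ => hX)

lemma addClosure_mono (h : S ⊆ T) : addClosure S ⊆ addClosure T := by
  rintro X ⟨n, g, hg, s, p, hsp⟩
  exact ⟨n, g, fun k => h (hg k), s, p, hsp⟩

lemma addClosure_addClosure_subset : addClosure (addClosure S) ⊆ addClosure S := by
  rintro X ⟨n, g, hg, s, p, hsp⟩
  choose m G hG i r hir using hg
  let e := biproductBiproductIso (fun k => Fin (m k)) G
  refine mem_addClosure_of_retract
    ⟨s ≫ biproduct.map i ≫ e.hom, e.inv ≫ biproduct.map r ≫ p, ?_⟩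
    (biproduct_mem_addClosure fun _ => hG _ _)
  have : biproduct.map i ≫ biproduct.map r = 𝟙 (⨁ g) := by ext; simp [hir]
  simp [reassoc_of% this, hsp]

lemma addClosure_isZero_subset : addClosure {X : C | IsZero X} ⊆ {X | IsZero X} := by
  rintro X ⟨n, g, hg, s, p, hsp⟩
  have hs : s = 0 := biproduct.hom_ext _ _ fun k => (hg k).eq_of_tgt _ _
  exact (IsZero.iff_id_eq_zero X).2 (by rw [← hsp, hs, zero_comp])

end addClosure

namespace CategoryTheory.ShortComplex.ShortExact

variable {S : ShortComplex C}

lemma biproduct {ι : Type} [Finite ι] {E : ι → ShortComplex C} (hE : ∀ i, (E i).ShortExact) :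
    (ShortComplex.mk (biproduct.map fun i => (E i).f) (biproduct.map fun i => (E i).g)
      (by ext; simp)).ShortExact := by
  have := fun i => (hE i).mono_f
  have := fun i => (hE i).epi_g
  have : Mono (biproduct.map fun i => (E i).f) := inferInstance
  have : Epi (biproduct.map fun i => (E i).g) := inferInstance
  refine .mk' (exact_of_f_is_kernel _ (KernelFork.IsLimit.ofι' _ _ fun k hk =>
    ⟨biproduct.lift fun i => (hE i).exact.lift (k ≫ biproduct.π _ i) ?_, ?_⟩))
    inferInstance inferInstance
  · simpa using hk =≫ biproduct.π _ i
  · ext i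
    simp

lemma pushout (hS : S.ShortExact) {Y : C} (t : S.X₁ ⟶ Y) :
    (ShortComplex.mk (pushout.inr S.f t) (pushout.desc S.g 0 (by simp))
      (pushout.inr_desc _ _ _)).ShortExact := by
  have := hS.mono_f
  have := hS.epi_g
  have : Epi (pushout.desc S.g 0 (by simp) : Limits.pushout S.f t ⟶ S.X₃) :=
    epi_of_epi_fac (pushout.inl_desc _ _ _)
  refine .mk' (exact_of_g_is_cokernel _ (CokernelCofork.IsColimit.ofπ' _ _ fun k hk =>
    ⟨hS.exact.desc (pushout.inl _ _ ≫ k) ?_, ?_⟩)) inferInstance inferInstance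
  · rw [pushout.condition_assoc, hk, comp_zero]
  · ext
    · rw [pushout.inl_desc_assoc, hS.exact.g_desc]
    · rw [pushout.inr_desc_assoc, zero_comp, hk]

lemma comp_pushout_inl (hS : S.ShortExact) {Y : C} (i : S.X₂ ⟶ Y) [Mono i] :
    (ShortComplex.mk (S.f ≫ i) (pushout.inl i S.g)
      (by rw [Category.assoc, pushout.condition, S.zero_assoc, zero_comp])).ShortExact := by
  have := hS.mono_f
  have := hS.epi_g
  refine .mk' (exact_of_g_is_cokernel _ (CokernelCofork.IsColimit.ofπ' _ _ fun k hk =>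
    ⟨pushout.desc k (hS.exact.desc (i ≫ k) (by simpa using hk)) (by simp),
      pushout.inl_desc _ _ _⟩)) inferInstance inferInstance

end CategoryTheory.ShortComplex.ShortExact

/-- `bulletOp S T` is `addClosure (extensions S T)` by definition. -/
def extensions (S T : Set C) : Set C :=
  {X | ∃ (U V : C) (_ : U ∈ S) (_ : V ∈ T) (f : U ⟶ X) (g : X ⟶ V)
    (w : f ≫ g = 0), (ShortComplex.mk f g w).ShortExact}

section extensions

variable {S T U : Set C}

lemma CategoryTheory.ShortComplex.ShortExact.mem_extensions {E : ShortComplex C}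
    (hE : E.ShortExact) (h₁ : E.X₁ ∈ S) (h₃ : E.X₃ ∈ T) : E.X₂ ∈ extensions S T :=
  ⟨_, _, h₁, h₃, E.f, E.g, E.zero, hE⟩

lemma extensions_mono {S' T' : Set C} (hS : S ⊆ S') (hT : T ⊆ T') :
    extensions S T ⊆ extensions S' T' := by
  rintro X ⟨A, B, hA, hB, f, g, w, hE⟩
  exact ⟨A, B, hS hA, hT hB, f, g, w, hE⟩

lemma bulletOp_mono {S' T' : Set C} (hS : S ⊆ S') (hT : T ⊆ T') :
    bulletOp S T ⊆ bulletOp S' T' :=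
  addClosure_mono (extensions_mono hS hT)

lemma extensions_isZero_left_subset : extensions {X : C | IsZero X} T ⊆ addClosure T := by
  rintro X ⟨A, B, hA, hB, _, g, _, hE⟩
  have := hE.isIso_g_iff.2 hA
  exact mem_addClosure_of_retract (asIso g).retract (subset_addClosure hB)

lemma bulletOp_isZero_left_subset (hT : addClosure T ⊆ T) :
    bulletOp {X : C | IsZero X} T ⊆ T :=
  (addClosure_mono extensions_isZero_left_subset).trans
    (addClosure_addClosure_subset.trans hT)

lemma biproduct_mem_extensions (hS : addClosure S ⊆ S) (hT : addClosure T ⊆ T) {ι : Type}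
    [Finite ι] {F : ι → C} (hF : ∀ i, F i ∈ extensions S T) : (⨁ F) ∈ extensions S T := by
  choose A B hA hB f g w hE using hF
  have hE' := ShortComplex.ShortExact.biproduct (E := fun i => .mk (f i) (g i) (w i)) hE
  exact hE'.mem_extensions (hS (biproduct_mem_addClosure hA)) (hT (biproduct_mem_addClosure hB))

lemma mem_bulletOp_bulletOp_of_shortExact {E B : ShortComplex C} (hE : E.ShortExact)
    (hB : B.ShortExact) (r : Retract E.X₁ B.X₂) (h₁ : B.X₁ ∈ S) (h₃ : B.X₃ ∈ T)
    (hU : E.X₃ ∈ U) : E.X₂ ∈ bulletOp S (bulletOp T U) := by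
  have hP := hE.pushout r.i
  have hQ := hP.pushout B.g
  have := hP.mono_f
  have hPQ := hB.comp_pushout_inl (pushout.inr E.f r.i)
  refine mem_addClosure_of_retract
    ⟨pushout.inl E.f r.i,
      pushout.desc (𝟙 _) (r.r ≫ E.f) (by rw [Category.comp_id, r.retract_assoc]),
      pushout.inl_desc _ _ _⟩
    (subset_addClosure (hPQ.mem_extensions h₁ (subset_addClosure ?_)))
  exact hQ.mem_extensions h₃ hU

lemma extensions_addClosure_extensions_subset (hS : addClosure S ⊆ S) (hT : addClosure T ⊆ T) :
    extensions (addClosure (extensions S T)) U ⊆ bulletOp S (bulletOp T U) := by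
  rintro X ⟨A, W, ⟨n, F, hF, s, p, hsp⟩, hW, f, g, w, hE⟩
  obtain ⟨S', T', hS', hT', _, _, _, hB⟩ := biproduct_mem_extensions hS hT hF
  exact mem_bulletOp_bulletOp_of_shortExact (E := .mk f g w) hE hB ⟨s, p, hsp⟩ hS' hT' hW

lemma bulletOp_assoc_subset (hS : addClosure S ⊆ S) (hT : addClosure T ⊆ T) :
    bulletOp (bulletOp S T) U ⊆ bulletOp S (bulletOp T U) :=
  (addClosure_mono (extensions_addClosure_extensions_subset hS hT)).trans
    addClosure_addClosure_subset

end extensions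

lemma addClosure_bracket_subset (T : C) : ∀ n, addClosure (bracket T n) ⊆ bracket T n
  | 0 => addClosure_isZero_subset
  | _ + 1 => addClosure_addClosure_subset

lemma bracket_mono_of_mem_addClosure {T T' : C} (h : T ∈ addClosure {T'}) :
    ∀ n, bracket T n ⊆ bracket T' n
  | 0 => subset_rfl
  | n + 1 => bulletOp_mono
      ((addClosure_mono (Set.singleton_subset_iff.2 h)).trans addClosure_addClosure_subset)
      (bracket_mono_of_mem_addClosure h n)

lemma bulletOp_bracket_bracket_subset (T : C) (m n : ℕ) :
    bulletOp (bracket T m) (bracket T n) ⊆ bracket T (m + n) := by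
  induction m with
  | zero =>
    rw [Nat.zero_add]
    exact bulletOp_isZero_left_subset (addClosure_bracket_subset T n)
  | succ m ih =>
    calc bulletOp (bracket T (m + 1)) (bracket T n)
        ⊆ bulletOp (addClosure {T}) (bulletOp (bracket T m) (bracket T n)) :=
          bulletOp_assoc_subset addClosure_addClosure_subset (addClosure_bracket_subset T m)
      _ ⊆ bracket T (m + n + 1) := bulletOp_mono subset_rfl ih
      _ = bracket T (m + 1 + n) := by rw [Nat.add_right_comm]

theorem bulletOp_bracket_subset_general (T₁ T₂ : C) (m n : ℕ) :
    bulletOp (bracket T₁ m) (bracket T₂ n) ⊆ bracket (T₁ ⊞ T₂) (m + n) :=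
  have h₁ : T₁ ∈ addClosure {T₁ ⊞ T₂} :=
    mem_addClosure_of_retract ⟨biprod.inl, biprod.fst, biprod.inl_fst⟩ (subset_addClosure rfl)
  have h₂ : T₂ ∈ addClosure {T₁ ⊞ T₂} :=
    mem_addClosure_of_retract ⟨biprod.inr, biprod.snd, biprod.inr_snd⟩ (subset_addClosure rfl)
  (bulletOp_mono (bracket_mono_of_mem_addClosure h₁ m)
    (bracket_mono_of_mem_addClosure h₂ n)).trans (bulletOp_bracket_bracket_subset _ m n)

/-- Let `𝒜` be an abelian category, `T₁, T₂` objects of `𝒜` and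
`m, n ≥ 1`.  Then `[T₁]_m • [T₂]_n ⊆ [T₁ ⊕ T₂]_{m+n}`. -/
theorem bulletOp_bracket_subset (T₁ T₂ : C) (m n : ℕ) (hm : 1 ≤ m) (hn : 1 ≤ n) :
    bulletOp (bracket T₁ m) (bracket T₂ n) ⊆ bracket (T₁ ⊞ T₂) (m + n) :=
  bulletOp_bracket_subset_general T₁ T₂ m n
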